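/- arXiv:1711.02305 — 4 statements merged into one kernel-verified Lean document; each statement's English description precedes it below -/
import Mathlib

section
/- If R ∈ R^{k×d} satisfies |⟨R e_i, R e_i⟩ - 1| ≤ ε for all i and |⟨R e_i, R e_j⟩| ≤ ε for i ≠ j, then for any vector v ∈ R^d, ‖Rv‖₂ ≤ sqrt(‖v‖₂² + ε‖v‖₁²) ≤ ‖v‖₂ + sqrt(ε)·‖v‖₁. -/
/-!
The Gram matrix `Rᵀ * R` differs from the identity by a matrix `E` whose entries are all at
most `ε` in absolute value, so `‖Rv‖₂² = ‖v‖₂² + vᵀ E v ≤ ‖v‖₂² + ε ‖v‖₁²`. The second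
inequality is subadditivity of the square root.
-/

open Matrix

lemma Real.sqrt_add_le_add_sqrt {x y : ℝ} (hx : 0 ≤ x) (hy : 0 ≤ y) : √(x + y) ≤ √x + √y := by
  rw [Real.sqrt_le_left (by positivity), add_sq, Real.sq_sqrt hx, Real.sq_sqrt hy]
  nlinarith [Real.sqrt_nonneg x, Real.sqrt_nonneg y]

namespace Matrix

variable {m n : Type*} [Fintype m] [Fintype n]

lemma dotProduct_mulVec_le_of_abs_le {E : Matrix n n ℝ} {ε : ℝ} (hE : ∀ i j, |E i j| ≤ ε)
    (v : n → ℝ) : v ⬝ᵥ E *ᵥ v ≤ ε * (∑ i, |v i|) ^ 2 := by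
  calc v ⬝ᵥ E *ᵥ v = ∑ i, ∑ j, v i * E i j * v j := by
        simp only [dotProduct, mulVec, Finset.mul_sum, mul_assoc]
    _ ≤ ∑ i, ∑ j, |v i| * ε * |v j| := by
        refine Finset.sum_le_sum fun i _ => Finset.sum_le_sum fun j _ => ?_
        calc v i * E i j * v j ≤ |v i * E i j * v j| := le_abs_self _
          _ = |v i| * |E i j| * |v j| := by rw [abs_mul, abs_mul]
          _ ≤ |v i| * ε * |v j| := by gcongr; exact hE i j
    _ = ε * (∑ i, |v i|) ^ 2 := by
        rw [sq, Finset.sum_mul_sum, Finset.mul_sum]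
        simp only [Finset.mul_sum]
        exact Finset.sum_congr rfl fun i _ => Finset.sum_congr rfl fun j _ => by ring

lemma sum_mulVec_sq_eq_dotProduct_gram (R : Matrix m n ℝ) (v : n → ℝ) :
    ∑ a, (R *ᵥ v) a ^ 2 = v ⬝ᵥ (Rᵀ * R) *ᵥ v := by
  rw [← mulVec_mulVec, dotProduct_mulVec, vecMul_transpose]
  simp only [dotProduct, sq]

lemma sum_mulVec_sq_le_of_abs_gram_sub_one_le [DecidableEq n] {R : Matrix m n ℝ} {ε : ℝ}
    (hR : ∀ i j, |(Rᵀ * R - 1 : Matrix n n ℝ) i j| ≤ ε) (v : n → ℝ) :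
    ∑ a, (R *ᵥ v) a ^ 2 ≤ ∑ i, v i ^ 2 + ε * (∑ i, |v i|) ^ 2 := by
  have hsplit : Rᵀ * R = 1 + (Rᵀ * R - 1) := (add_sub_cancel _ _).symm
  rw [sum_mulVec_sq_eq_dotProduct_gram, hsplit, add_mulVec, one_mulVec, dotProduct_add]
  gcongr
  · simp only [dotProduct, sq, le_refl]
  · exact dotProduct_mulVec_le_of_abs_le hR v

end Matrix

/-- norm bound `‖Rv‖₂ ≤ sqrt(‖v‖₂² + ε‖v‖₁²) ≤ ‖v‖₂ + √ε ‖v‖₁`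
under the approximate basis-orthonormality condition on `R`. -/
theorem stmt2 {d k : ℕ} (ε : ℝ) (hε : 0 ≤ ε) (R : Matrix (Fin k) (Fin d) ℝ)
    (hdiag : ∀ i : Fin d,
      |(∑ a, R.mulVec (Pi.single i 1) a * R.mulVec (Pi.single i 1) a) - 1| ≤ ε)
    (hoff : ∀ i j : Fin d, i ≠ j →
      |∑ a, R.mulVec (Pi.single i 1) a * R.mulVec (Pi.single j 1) a| ≤ ε)
    (v : Fin d → ℝ) :
    Real.sqrt (∑ a, (R.mulVec v a) ^ 2) ≤
        Real.sqrt ((∑ i, (v i) ^ 2) + ε * (∑ i, |v i|) ^ 2) ∧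
      Real.sqrt ((∑ i, (v i) ^ 2) + ε * (∑ i, |v i|) ^ 2) ≤
        Real.sqrt (∑ i, (v i) ^ 2) + Real.sqrt ε * (∑ i, |v i|) := by
  have hgram (i j : Fin d) :
      (Rᵀ * R) i j = ∑ a, R.mulVec (Pi.single i 1) a * R.mulVec (Pi.single j 1) a := by
    simp [mul_apply]
  have hR (i j : Fin d) : |(Rᵀ * R - 1 : Matrix (Fin d) (Fin d) ℝ) i j| ≤ ε := by
    rcases eq_or_ne i j with rfl | hij
    · simpa [hgram] using hdiag i
    · simpa [hgram, hij] using hoff i j hij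
  refine ⟨Real.sqrt_le_sqrt (sum_mulVec_sq_le_of_abs_gram_sub_one_le hR v), ?_⟩
  calc _ ≤ √(∑ i, v i ^ 2) + √(ε * (∑ i, |v i|) ^ 2) :=
        Real.sqrt_add_le_add_sqrt (by positivity) (by positivity)
    _ = _ := by rw [Real.sqrt_mul hε, Real.sqrt_sq (by positivity)]
end

section
/- Let F: R^T -> R be convex differentiable, let K and K̂ be positive semidefinite T×T matrices, λ > 0, and define J(α) = F(α) + (1/(2λT²))αᵀKα and Ĵ(α) = F(α) + (1/(2λT²))αᵀK̂α. Let α* minimize J and α̂* minimize Ĵ. Then (1/(λT²)) (α̂* - α*)ᵀ K̂ (α̂* - α*) ≤ (1/(λT²)) (α* - α̂*)ᵀ (K̂ - K) α*. -/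
/-!
The first-order conditions read `∇F(α*) = -(1/(λT²)) K α*` and `∇F(α̂*) = -(1/(λT²)) K̂ α̂*`
(the factor 2 from differentiating the quadratic form uses the symmetry of `K`, `K̂`).
Monotonicity of the gradient of the convex `F`, `⟪∇F(α̂*) - ∇F(α*), α̂* - α*⟫ ≥ 0`, then becomes
the claimed inequality after adding and subtracting `K̂ α*`.
-/

open Matrix Set

theorem ConvexOn.fderiv_apply_sub_le {E : Type*} [NormedAddCommGroup E] [NormedSpace ℝ E]
    {F : E → ℝ} (hFconv : ConvexOn ℝ univ F) (hFdiff : Differentiable ℝ F) (x y : E) :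
    fderiv ℝ F x (y - x) ≤ fderiv ℝ F y (y - x) := by
  have hderiv (t : ℝ) : HasDerivAt (F ∘ AffineMap.lineMap x y)
      (fderiv ℝ F (AffineMap.lineMap x y t) (y - x)) t :=
    (hFdiff _).hasFDerivAt.comp_hasDerivAt t (AffineMap.hasDerivAt_lineMap ..)
  have hmono := (hFconv.comp_affineMap (AffineMap.lineMap x y)).monotoneOn_deriv
    (fun t _ => (hderiv t).differentiableAt) (mem_univ 0) (mem_univ 1) zero_le_one
  simpa only [(hderiv _).deriv, AffineMap.lineMap_apply_zero, AffineMap.lineMap_apply_one]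
    using hmono

theorem Matrix.hasDerivAt_dotProduct_mulVec_add_smul {n : Type*} [Fintype n]
    (M : Matrix n n ℝ) (x d : n → ℝ) :
    HasDerivAt (fun t : ℝ => (x + t • d) ⬝ᵥ M *ᵥ (x + t • d))
      (x ⬝ᵥ M *ᵥ d + d ⬝ᵥ M *ᵥ x) 0 := by
  have hexpand : (fun t : ℝ => (x + t • d) ⬝ᵥ M *ᵥ (x + t • d)) = fun t =>
      x ⬝ᵥ M *ᵥ x + t * (x ⬝ᵥ M *ᵥ d + d ⬝ᵥ M *ᵥ x) + t ^ 2 * (d ⬝ᵥ M *ᵥ d) := by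
    ext t
    simp only [mulVec_add, mulVec_smul, dotProduct_add, add_dotProduct, dotProduct_smul,
      smul_dotProduct, smul_eq_mul]
    ring
  rw [hexpand]
  simpa using (((hasDerivAt_id' (0 : ℝ)).mul_const (x ⬝ᵥ M *ᵥ d + d ⬝ᵥ M *ᵥ x)).const_add
    (x ⬝ᵥ M *ᵥ x)).fun_add ((hasDerivAt_pow 2 (0 : ℝ)).mul_const (d ⬝ᵥ M *ᵥ d))

theorem Matrix.IsSymm.fderiv_apply_eq_of_isLocalMin_add_dotProduct_mulVec {n : Type*}
    [Fintype n] {F : (n → ℝ) → ℝ} (hFdiff : Differentiable ℝ F) {M : Matrix n n ℝ}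
    (hM : M.IsSymm) {c : ℝ} {x : n → ℝ}
    (hmin : IsLocalMin (fun α => F α + c * (α ⬝ᵥ M *ᵥ α)) x) (d : n → ℝ) :
    fderiv ℝ F x d = -(2 * c * (d ⬝ᵥ M *ᵥ x)) := by
  have hline : HasDerivAt (fun t : ℝ => x + t • d) d 0 := by
    simpa using ((hasDerivAt_id (0 : ℝ)).smul_const d).const_add x
  have hF : HasDerivAt (fun t : ℝ => F (x + t • d)) (fderiv ℝ F x d) 0 :=
    (hFdiff x).hasFDerivAt.comp_hasDerivAt_of_eq 0 hline (by simp)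
  have hlocmin : IsLocalMin
      (fun t : ℝ => F (x + t • d) + c * ((x + t • d) ⬝ᵥ M *ᵥ (x + t • d))) 0 :=
    IsLocalMin.comp_continuous (f := fun α => F α + c * (α ⬝ᵥ M *ᵥ α))
      (by simpa using hmin) hline.continuousAt
  have hcrit := hlocmin.hasDerivAt_eq_zero
    (hF.add ((M.hasDerivAt_dotProduct_mulVec_add_smul x d).const_mul c))
  have hsymm : x ⬝ᵥ M *ᵥ d = d ⬝ᵥ M *ᵥ x := by
    rw [← dotProduct_transpose_mulVec, hM.eq]
  rw [hsymm] at hcrit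
  linarith

theorem stmt4_general {T : ℕ} (lam : ℝ)
    (F : (Fin T → ℝ) → ℝ) (hFconv : ConvexOn ℝ Set.univ F)
    (hFdiff : Differentiable ℝ F)
    (K Khat : Matrix (Fin T) (Fin T) ℝ) (hK : K.PosSemidef)
    (hKhat : Khat.PosSemidef)
    (J Jhat : (Fin T → ℝ) → ℝ)
    (hJ : ∀ α, J α = F α + (1 / (2 * lam * (T : ℝ) ^ 2)) *
      dotProduct α (K.mulVec α))
    (hJhat : ∀ α, Jhat α = F α + (1 / (2 * lam * (T : ℝ) ^ 2)) *
      dotProduct α (Khat.mulVec α))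
    (αs : Fin T → ℝ) (hmin : ∀ α, J αs ≤ J α)
    (αh : Fin T → ℝ) (hminh : ∀ α, Jhat αh ≤ Jhat α) :
    (1 / (lam * (T : ℝ) ^ 2)) *
        dotProduct (αh - αs) (Khat.mulVec (αh - αs)) ≤
      (1 / (lam * (T : ℝ) ^ 2)) *
        dotProduct (αs - αh) ((Khat - K).mulVec αs) := by
  set c := 1 / (2 * lam * (T : ℝ) ^ 2)
  have hc : 1 / (lam * (T : ℝ) ^ 2) = 2 * c := by
    simp only [c]
    ring
  have hsymmK : K.IsSymm := isHermitian_iff_isSymm.mp hK.isHermitian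
  have hsymmKhat : Khat.IsSymm := isHermitian_iff_isSymm.mp hKhat.isHermitian
  have hgradK := hsymmK.fderiv_apply_eq_of_isLocalMin_add_dotProduct_mulVec hFdiff
    (Filter.Eventually.of_forall fun α => by simpa only [hJ] using hmin α) (αh - αs)
  have hgradKhat := hsymmKhat.fderiv_apply_eq_of_isLocalMin_add_dotProduct_mulVec hFdiff
    (Filter.Eventually.of_forall fun α => by simpa only [hJhat] using hminh α) (αh - αs)
  have hmono := hFconv.fderiv_apply_sub_le hFdiff αs αh
  rw [hgradK, hgradKhat] at hmono
  have hexpand : (αs - αh) ⬝ᵥ (Khat - K) *ᵥ αs - (αh - αs) ⬝ᵥ Khat *ᵥ (αh - αs)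
      = (αh - αs) ⬝ᵥ K *ᵥ αs - (αh - αs) ⬝ᵥ Khat *ᵥ αh := by
    simp only [mulVec_sub, sub_mulVec, dotProduct_sub, sub_dotProduct]
    ring
  rw [hc]
  linear_combination hmono - 2 * c * hexpand

/-- perturbation bound between the minimizers of two
kernel-regularized convex objectives. -/
theorem stmt4 {T : ℕ} (hT : 0 < T) (lam : ℝ) (hlam : 0 < lam)
    (F : (Fin T → ℝ) → ℝ) (hFconv : ConvexOn ℝ Set.univ F)
    (hFdiff : Differentiable ℝ F)
    (K Khat : Matrix (Fin T) (Fin T) ℝ) (hK : K.PosSemidef)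
    (hKhat : Khat.PosSemidef)
    (J Jhat : (Fin T → ℝ) → ℝ)
    (hJ : ∀ α, J α = F α + (1 / (2 * lam * (T : ℝ) ^ 2)) *
      dotProduct α (K.mulVec α))
    (hJhat : ∀ α, Jhat α = F α + (1 / (2 * lam * (T : ℝ) ^ 2)) *
      dotProduct α (Khat.mulVec α))
    (αs : Fin T → ℝ) (hmin : ∀ α, J αs ≤ J α)
    (αh : Fin T → ℝ) (hminh : ∀ α, Jhat αh ≤ Jhat α) :
    (1 / (lam * (T : ℝ) ^ 2)) *
        dotProduct (αh - αs) (Khat.mulVec (αh - αs)) ≤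
      (1 / (lam * (T : ℝ) ^ 2)) *
        dotProduct (αs - αh) ((Khat - K).mulVec αs) :=
  stmt4_general lam F hFconv hFdiff K Khat hK hKhat J Jhat hJ hJhat αs hmin αh hminh
end

section
/- Under the hypotheses of the previous statement, and additionally assuming F is (1/(Tβ))-strongly convex with respect to the ℓ2 norm, the minimizers satisfy ‖α̂* - α*‖₁ ≤ 2Tβ‖Δ‖_∞, where Δ = (1/(λT))(K̂ - K)α*. -/
/-!
Write `d = α̂* - α*`. Since `K̂` is positive semidefinite, `Ĵ` inherits the strong convexity of `F`,
so moving from `α*` to `α* + t d` decreases `Ĵ` by at least `t (1 - t) ‖d‖₂² / (2Tβ)`,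
while it cannot decrease `J = Ĵ - (quadratic form of K̂ - K)`. Comparing the two to first order
in `t` gives `‖d‖₂² / (2Tβ) ≤ -⟨Δ, d⟩ / T ≤ ‖Δ‖_∞ ‖d‖₁ / T`, and Cauchy–Schwarz `‖d‖₁² ≤ T ‖d‖₂²`
turns this into the bound on `‖d‖₁`.
-/

open Filter Topology Finset Matrix

namespace Matrix

lemma PosSemidef.isSymm {n : Type*} {M : Matrix n n ℝ} (hM : M.PosSemidef) : M.IsSymm :=
  isHermitian_iff_isSymm.mp hM.isHermitian

variable {n R : Type*} [Fintype n]

lemma IsSymm.dotProduct_mulVec_comm [CommSemiring R] {M : Matrix n n R} (hM : M.IsSymm)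
    (u v : n → R) : u ⬝ᵥ M *ᵥ v = v ⬝ᵥ M *ᵥ u := by
  rw [dotProduct_mulVec, ← mulVec_transpose, hM.eq, dotProduct_comm]

lemma IsSymm.dotProduct_mulVec_add_smul [CommRing R] {M : Matrix n n R} (hM : M.IsSymm)
    (u v : n → R) (t : R) :
    (u + t • v) ⬝ᵥ M *ᵥ (u + t • v) =
      u ⬝ᵥ M *ᵥ u + 2 * t * (u ⬝ᵥ M *ᵥ v) + t ^ 2 * (v ⬝ᵥ M *ᵥ v) := by
  simp only [mulVec_add, mulVec_smul, dotProduct_add, add_dotProduct, dotProduct_smul,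
    smul_dotProduct, smul_eq_mul, hM.dotProduct_mulVec_comm v u]
  ring

lemma PosSemidef.dotProduct_mulVec_convex_comb_le {M : Matrix n n ℝ} (hM : M.PosSemidef)
    (u v : n → ℝ) {t : ℝ} (ht0 : 0 ≤ t) (ht1 : t ≤ 1) :
    (t • u + (1 - t) • v) ⬝ᵥ M *ᵥ (t • u + (1 - t) • v) ≤
      t * (u ⬝ᵥ M *ᵥ u) + (1 - t) * (v ⬝ᵥ M *ᵥ v) := by
  have hcomb : t • u + (1 - t) • v = v + t • (u - v) := by module
  have hu : u = v + (1 : ℝ) • (u - v) := by module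
  have hQ : 0 ≤ (u - v) ⬝ᵥ M *ᵥ (u - v) := hM.dotProduct_mulVec_nonneg (u - v)
  rw [hcomb, hM.isSymm.dotProduct_mulVec_add_smul]
  conv_rhs => rw [hu, hM.isSymm.dotProduct_mulVec_add_smul]
  nlinarith [mul_nonneg (mul_nonneg ht0 (sub_nonneg.mpr ht1)) hQ]

end Matrix

lemma nonpos_of_forall_le_mul {a b : ℝ} (h : ∀ t, 0 < t → t ≤ 1 → a ≤ t * b) : a ≤ 0 := by
  have hlim : Tendsto (fun t => t * b) (𝓝[>] 0) (𝓝 0) := by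
    simpa using (tendsto_nhdsWithin_of_tendsto_nhds (tendsto_id (x := 𝓝 (0 : ℝ)))).mul_const b
  refine ge_of_tendsto hlim ?_
  filter_upwards [Ioc_mem_nhdsGT one_pos] with t ht using h t ht.1 ht.2

lemma abs_dotProduct_le_sum_abs_mul_iSup_abs {ι : Type*} [Fintype ι] (x y : ι → ℝ) :
    |x ⬝ᵥ y| ≤ (∑ i, |x i|) * ⨆ i, |y i| := by
  rw [sum_mul]
  refine (abs_sum_le_sum_abs _ _).trans (sum_le_sum fun i _ => ?_)
  rw [abs_mul]
  exact mul_le_mul_of_nonneg_left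
    (le_ciSup (f := fun i => |y i|) (Set.finite_range _).bddAbove i) (abs_nonneg _)

lemma sum_abs_le_card_mul_of_sum_sq_le {ι : Type*} [Fintype ι] {y : ι → ℝ} {C : ℝ}
    (hC : 0 ≤ C) (h : ∑ i, y i ^ 2 ≤ C * ∑ i, |y i|) :
    ∑ i, |y i| ≤ Fintype.card ι * C := by
  have hcs : (∑ i, |y i|) ^ 2 ≤ Fintype.card ι * ∑ i, y i ^ 2 := by
    simpa only [sq_abs, card_univ] using sq_sum_le_card_mul_sum_sq (s := univ) (f := fun i => |y i|)
  have h1 : 0 ≤ ∑ i, |y i| := sum_nonneg fun i _ => abs_nonneg _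
  have h2 : (0 : ℝ) ≤ Fintype.card ι := Nat.cast_nonneg _
  rcases h1.eq_or_lt with h0 | hpos
  · rw [← h0]
    positivity
  · exact le_of_mul_le_mul_right (by nlinarith [mul_le_mul_of_nonneg_left h h2]) hpos

/-- Mathlib's `StrongConvexOn univ (2 * c)` for the Euclidean norm, spelled out on `ι → ℝ`
(whose norm is the sup norm). -/
def StrongConvexL2 {ι : Type*} [Fintype ι] (c : ℝ) (f : (ι → ℝ) → ℝ) : Prop :=
  ∀ u v : ι → ℝ, ∀ t : ℝ, 0 ≤ t → t ≤ 1 →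
    f (t • u + (1 - t) • v) ≤ t * f u + (1 - t) * f v - c * t * (1 - t) * ∑ i, (u i - v i) ^ 2

namespace StrongConvexL2

variable {ι : Type*} [Fintype ι] {c : ℝ} {f : (ι → ℝ) → ℝ}

lemma add_quadForm (hf : StrongConvexL2 c f) {M : Matrix ι ι ℝ} (hM : M.PosSemidef) {L : ℝ}
    (hL : 0 ≤ L) : StrongConvexL2 c fun x => f x + L * (x ⬝ᵥ M *ᵥ x) := by
  intro u v t ht0 ht1
  have hq := mul_le_mul_of_nonneg_left (hM.dotProduct_mulVec_convex_comb_le u v ht0 ht1) hL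
  linarith [hf u v t ht0 ht1]

lemma le_sub_of_forall_le (hf : StrongConvexL2 c f) {y : ι → ℝ} (hy : ∀ z, f y ≤ f z)
    (x : ι → ℝ) {t : ℝ} (ht0 : 0 ≤ t) (ht1 : t ≤ 1) :
    f (x + t • (y - x)) ≤ f x - c * t * (1 - t) * ∑ i, (y i - x i) ^ 2 := by
  have hcomb : x + t • (y - x) = t • y + (1 - t) • x := by module
  rw [hcomb]
  nlinarith [hf y x t ht0 ht1, hy x]

end StrongConvexL2

theorem minimizer_perturbation_inequality {ι : Type*} [Fintype ι] {F : (ι → ℝ) → ℝ} {c L : ℝ}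
    (hF : StrongConvexL2 c F) (hL : 0 ≤ L) {K Khat : Matrix ι ι ℝ} (hK : K.IsSymm)
    (hKhat : Khat.PosSemidef) {αs αh : ι → ℝ}
    (hmin : ∀ α, F αs + L * (αs ⬝ᵥ K *ᵥ αs) ≤ F α + L * (α ⬝ᵥ K *ᵥ α))
    (hminh : ∀ α, F αh + L * (αh ⬝ᵥ Khat *ᵥ αh) ≤ F α + L * (α ⬝ᵥ Khat *ᵥ α)) :
    2 * L * (αs ⬝ᵥ (Khat - K) *ᵥ (αh - αs)) + c * ∑ i, (αh i - αs i) ^ 2 ≤ 0 := by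
  have hD : (Khat - K).IsSymm := hKhat.isSymm.sub hK
  have hqD : ∀ x, x ⬝ᵥ (Khat - K) *ᵥ x = x ⬝ᵥ Khat *ᵥ x - x ⬝ᵥ K *ᵥ x := fun x => by
    rw [sub_mulVec, dotProduct_sub]
  refine nonpos_of_forall_le_mul
    (b := c * ∑ i, (αh i - αs i) ^ 2 - L * ((αh - αs) ⬝ᵥ (Khat - K) *ᵥ (αh - αs)))
    fun t ht0 ht1 => ?_
  have hdescent := (hF.add_quadForm hKhat hL).le_sub_of_forall_le hminh αs ht0.le ht1
  have hascent := hmin (αs + t • (αh - αs))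
  have hexpand := hD.dotProduct_mulVec_add_smul αs (αh - αs) t
  rw [hqD, hqD] at hexpand
  refine le_of_mul_le_mul_left ?_ ht0
  linear_combination hdescent + hascent - L * hexpand

theorem stmt5_general {T : ℕ} (hT : 0 < T) (lam β : ℝ) (hlam : 0 < lam) (hβ : 0 < β)
    (F : (Fin T → ℝ) → ℝ)
    (hFsc : ∀ u v : Fin T → ℝ, ∀ t : ℝ, 0 ≤ t → t ≤ 1 →
      F (t • u + (1 - t) • v) ≤ t * F u + (1 - t) * F v -
        (1 / (2 * (T : ℝ) * β)) * t * (1 - t) * ∑ i, (u i - v i) ^ 2)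
    (K Khat : Matrix (Fin T) (Fin T) ℝ) (hK : K.PosSemidef)
    (hKhat : Khat.PosSemidef)
    (J Jhat : (Fin T → ℝ) → ℝ)
    (hJ : ∀ α, J α = F α + (1 / (2 * lam * (T : ℝ) ^ 2)) *
      dotProduct α (K.mulVec α))
    (hJhat : ∀ α, Jhat α = F α + (1 / (2 * lam * (T : ℝ) ^ 2)) *
      dotProduct α (Khat.mulVec α))
    (αs : Fin T → ℝ) (hmin : ∀ α, J αs ≤ J α)
    (αh : Fin T → ℝ) (hminh : ∀ α, Jhat αh ≤ Jhat α)
    (Δ : Fin T → ℝ)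
    (hΔ : Δ = (1 / (lam * (T : ℝ))) • ((Khat - K).mulVec αs)) :
    ∑ i, |αh i - αs i| ≤ 2 * (T : ℝ) * β * (⨆ t, |Δ t|) := by
  have hT' : (0 : ℝ) < T := Nat.cast_pos.mpr hT
  have hfirst := minimizer_perturbation_inequality (L := 1 / (2 * lam * (T : ℝ) ^ 2)) hFsc
    (by positivity) hK.isSymm hKhat (fun α => by simpa only [hJ] using hmin α)
    (fun α => by simpa only [hJhat] using hminh α)
  have hcross : 2 * (1 / (2 * lam * (T : ℝ) ^ 2)) * (αs ⬝ᵥ (Khat - K) *ᵥ (αh - αs)) =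
      (αh - αs) ⬝ᵥ Δ / T := by
    rw [hΔ, dotProduct_smul, (hKhat.isSymm.sub hK.isSymm).dotProduct_mulVec_comm, smul_eq_mul]
    field_simp
  have hholder : -((αh - αs) ⬝ᵥ Δ) ≤ (∑ i, |αh i - αs i|) * ⨆ t, |Δ t| :=
    (neg_le_abs _).trans (abs_dotProduct_le_sum_abs_mul_iSup_abs (αh - αs) Δ)
  have hl2 : ∑ i, (αh i - αs i) ^ 2 ≤ 2 * β * (⨆ t, |Δ t|) * ∑ i, |αh i - αs i| := by
    rw [hcross] at hfirst
    have hscaled := mul_le_mul_of_nonneg_left hfirst (by positivity : (0 : ℝ) ≤ 2 * T * β)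
    field_simp at hscaled
    linarith [mul_le_mul_of_nonneg_left hholder (by positivity : (0 : ℝ) ≤ 2 * β)]
  calc ∑ i, |αh i - αs i| ≤ T * (2 * β * ⨆ t, |Δ t|) := by
        simpa using sum_abs_le_card_mul_of_sum_sq_le (y := fun i => αh i - αs i)
          (by have := Real.iSup_nonneg fun t => abs_nonneg (Δ t); positivity) hl2
    _ = 2 * T * β * ⨆ t, |Δ t| := by ring

/-- with `F` additionally `1/(Tβ)`-strongly convex (w.r.t. ℓ2),
the dual minimizers satisfy `‖α̂* - α*‖₁ ≤ 2Tβ‖Δ‖_∞` where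
`Δ = (1/(λT))(K̂ - K)α*`. -/
theorem stmt5 {T : ℕ} (hT : 0 < T) (lam β : ℝ) (hlam : 0 < lam) (hβ : 0 < β)
    (F : (Fin T → ℝ) → ℝ) (hFconv : ConvexOn ℝ Set.univ F)
    (hFdiff : Differentiable ℝ F)
    (hFsc : ∀ u v : Fin T → ℝ, ∀ t : ℝ, 0 ≤ t → t ≤ 1 →
      F (t • u + (1 - t) • v) ≤ t * F u + (1 - t) * F v -
        (1 / (2 * (T : ℝ) * β)) * t * (1 - t) * ∑ i, (u i - v i) ^ 2)
    (K Khat : Matrix (Fin T) (Fin T) ℝ) (hK : K.PosSemidef)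
    (hKhat : Khat.PosSemidef)
    (J Jhat : (Fin T → ℝ) → ℝ)
    (hJ : ∀ α, J α = F α + (1 / (2 * lam * (T : ℝ) ^ 2)) *
      dotProduct α (K.mulVec α))
    (hJhat : ∀ α, Jhat α = F α + (1 / (2 * lam * (T : ℝ) ^ 2)) *
      dotProduct α (Khat.mulVec α))
    (αs : Fin T → ℝ) (hmin : ∀ α, J αs ≤ J α)
    (αh : Fin T → ℝ) (hminh : ∀ α, Jhat αh ≤ Jhat α)
    (Δ : Fin T → ℝ)
    (hΔ : Δ = (1 / (lam * (T : ℝ))) • ((Khat - K).mulVec αs)) :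
    ∑ i, |αh i - αs i| ≤ 2 * (T : ℝ) * β * (⨆ t, |Δ t|) :=
  stmt5_general hT lam β hlam hβ F hFsc K Khat hK hKhat J Jhat hJ hJhat αs hmin αh hminh Δ hΔ
end

section
/- With Δ = (1/(λT))(K̂ - K)α* where K = X̃ᵀX̃, K̂ = X̃ᵀRᵀRX̃, and w* = -(1/(λT))X̃α*: if R satisfies the basis-vector condition (‖Re_i‖² = 1 ± θ and |⟨Re_i, Re_j⟩| ≤ θ for i ≠ j), then ‖Δ‖_∞ ≤ 2θγ‖w*‖₁, where γ = max_t ‖x_t‖₁ and the columns of X̃ are y_t x_t with y_t ∈ {-1,+1}. -/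
/-!
Write `w* = -(1/(λT)) X̃ α*`. Since `K̂ - K = X̃ᵀ (RᵀR - 1) X̃`, we get
`Δ = -X̃ᵀ (RᵀR - 1) w*`, so `Δ_t = -⟪y_t x_t, (RᵀR - 1) w*⟫`. The basis-vector condition says
precisely that every entry of the Gram deviation `RᵀR - 1` is at most `θ` in absolute value,
and a bilinear form with entries bounded by `θ` is bounded by `θ ‖u‖₁ ‖v‖₁`.
-/

open Matrix

theorem Matrix.abs_dotProduct_mulVec_le {m n : Type*} [Fintype m] [Fintype n]
    (E : Matrix m n ℝ) {θ : ℝ} (hE : ∀ i j, |E i j| ≤ θ) (u : m → ℝ) (v : n → ℝ) :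
    |u ⬝ᵥ E *ᵥ v| ≤ θ * (∑ i, |u i|) * ∑ j, |v j| := by
  calc |u ⬝ᵥ E *ᵥ v| = |∑ i, ∑ j, u i * E i j * v j| := by
        simp only [dotProduct, mulVec, Finset.mul_sum, mul_assoc]
    _ ≤ ∑ i, ∑ j, |u i| * θ * |v j| := by
        refine (Finset.abs_sum_le_sum_abs _ _).trans (Finset.sum_le_sum fun i _ => ?_)
        refine (Finset.abs_sum_le_sum_abs _ _).trans (Finset.sum_le_sum fun j _ => ?_)
        rw [abs_mul, abs_mul]
        gcongr
        exact hE i j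
    _ = θ * (∑ i, |u i|) * ∑ j, |v j| := by
        rw [mul_assoc, Finset.sum_mul_sum]
        simp only [Finset.mul_sum]
        exact Finset.sum_congr rfl fun i _ => Finset.sum_congr rfl fun j _ => by ring

theorem Matrix.abs_transpose_mul_self_sub_one_le {k d : Type*} [Fintype k] [Fintype d]
    [DecidableEq d] (R : Matrix k d ℝ) {θ : ℝ}
    (hdiag : ∀ i, |(R *ᵥ Pi.single i 1) ⬝ᵥ (R *ᵥ Pi.single i 1) - 1| ≤ θ)
    (hoff : ∀ i j, i ≠ j → |(R *ᵥ Pi.single i 1) ⬝ᵥ (R *ᵥ Pi.single j 1)| ≤ θ) (i j : d) :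
    |(Rᵀ * R - 1 : Matrix d d ℝ) i j| ≤ θ := by
  have hgram : (Rᵀ * R) i j = (R *ᵥ Pi.single i 1) ⬝ᵥ (R *ᵥ Pi.single j 1) := by
    simp only [mulVec_single_one, mul_apply, transpose_apply, dotProduct, col_apply]
  rcases eq_or_ne i j with rfl | hij
  · simpa [hgram] using hdiag i
  · simpa [hgram, hij] using hoff i j hij

theorem Matrix.smul_kernel_deviation_mulVec {m n : Type*} [Fintype m] [Fintype n]
    [DecidableEq n] (X : Matrix n m ℝ) (G : Matrix n n ℝ) (c : ℝ) (α : m → ℝ) :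
    c • ((Xᵀ * G * X - Xᵀ * X) *ᵥ α) = -(Xᵀ *ᵥ ((G - 1) *ᵥ (-c • X *ᵥ α))) := by
  rw [show Xᵀ * G * X - Xᵀ * X = Xᵀ * (G - 1) * X by
    rw [Matrix.mul_sub, Matrix.sub_mul, Matrix.mul_one]]
  simp only [← mulVec_mulVec, mulVec_smul, neg_smul, mulVec_neg, neg_neg]

theorem stmt14_general {d k T : ℕ} (lam θ γ : ℝ) (hθ : 0 ≤ θ)
    (x : Fin T → Fin d → ℝ) (y : Fin T → ℝ) (hy : ∀ t, y t = 1 ∨ y t = -1)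
    (Xt : Matrix (Fin d) (Fin T) ℝ) (hXt : ∀ i t, Xt i t = y t * x t i)
    (R : Matrix (Fin k) (Fin d) ℝ)
    (hdiag : ∀ i : Fin d,
      |(∑ a, R.mulVec (Pi.single i 1) a * R.mulVec (Pi.single i 1) a) - 1| ≤ θ)
    (hoff : ∀ i j : Fin d, i ≠ j →
      |∑ a, R.mulVec (Pi.single i 1) a * R.mulVec (Pi.single j 1) a| ≤ θ)
    (hγ : ∀ t, (∑ i, |x t i|) ≤ γ)
    (αs : Fin T → ℝ) (ws : Fin d → ℝ)
    (hw : ws = (-(1 / (lam * (T : ℝ)))) • Xt.mulVec αs)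
    (Δ : Fin T → ℝ)
    (hΔ : Δ = (1 / (lam * (T : ℝ))) •
      ((Xt.transpose * R.transpose * R * Xt - Xt.transpose * Xt).mulVec αs)) :
    ∀ t, |Δ t| ≤ 2 * θ * γ * (∑ i, |ws i|) := by
  intro t
  have hΔt : Δ t = -((fun i => Xt i t) ⬝ᵥ (Rᵀ * R - 1) *ᵥ ws) := by
    rw [hΔ, hw, Matrix.mul_assoc Xtᵀ, smul_kernel_deviation_mulVec, Pi.neg_apply]
    rfl
  have hcol : ∑ i, |Xt i t| = ∑ i, |x t i| := by
    refine Finset.sum_congr rfl fun i _ => ?_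
    rcases hy t with h | h <;> simp [hXt, h]
  have hγ0 : 0 ≤ γ := (Finset.sum_nonneg fun i _ => abs_nonneg (x t i)).trans (hγ t)
  have hw0 : 0 ≤ ∑ i, |ws i| := Finset.sum_nonneg fun i _ => abs_nonneg (ws i)
  calc |Δ t| ≤ θ * (∑ i, |Xt i t|) * ∑ i, |ws i| := by
        rw [hΔt, abs_neg]
        exact abs_dotProduct_mulVec_le _ (abs_transpose_mul_self_sub_one_le R hdiag hoff) _ _
    _ ≤ θ * γ * ∑ i, |ws i| := by rw [hcol]; gcongr; exact hγ t
    _ ≤ 2 * θ * γ * ∑ i, |ws i| := by nlinarith [mul_nonneg (mul_nonneg hθ hγ0) hw0]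

/-- bound `‖Δ‖_∞ ≤ 2θγ‖w*‖₁` for
`Δ = (1/(λT))(K̂ - K)α*`, `K = X̃ᵀX̃`, `K̂ = X̃ᵀRᵀRX̃`,
`w* = -(1/(λT))X̃α*`, under the basis-vector condition on `R`. -/
theorem stmt14 {d k T : ℕ} (lam θ γ : ℝ) (hlam : 0 < lam) (hθ : 0 ≤ θ)
    (x : Fin T → Fin d → ℝ) (y : Fin T → ℝ) (hy : ∀ t, y t = 1 ∨ y t = -1)
    (Xt : Matrix (Fin d) (Fin T) ℝ) (hXt : ∀ i t, Xt i t = y t * x t i)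
    (R : Matrix (Fin k) (Fin d) ℝ)
    (hdiag : ∀ i : Fin d,
      |(∑ a, R.mulVec (Pi.single i 1) a * R.mulVec (Pi.single i 1) a) - 1| ≤ θ)
    (hoff : ∀ i j : Fin d, i ≠ j →
      |∑ a, R.mulVec (Pi.single i 1) a * R.mulVec (Pi.single j 1) a| ≤ θ)
    (hγ : ∀ t, (∑ i, |x t i|) ≤ γ)
    (αs : Fin T → ℝ) (ws : Fin d → ℝ)
    (hw : ws = (-(1 / (lam * (T : ℝ)))) • Xt.mulVec αs)
    (Δ : Fin T → ℝ)
    (hΔ : Δ = (1 / (lam * (T : ℝ))) •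
      ((Xt.transpose * R.transpose * R * Xt - Xt.transpose * Xt).mulVec αs)) :
    ∀ t, |Δ t| ≤ 2 * θ * γ * (∑ i, |ws i|) :=
  stmt14_general lam θ γ hθ x y hy Xt hXt R hdiag hoff hγ αs ws hw Δ hΔ
end
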